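/- arXiv:2503.03121 — 2 statements merged into one kernel-verified Lean document; each statement's English description precedes it below -/
import Mathlib

section
/- For a partition λ with Frobenius rows (a_1,...,a_s; b_1,...,b_s), suppose i ≤ s < j and the box (i,j) lies in the Young diagram of λ (i.e., j ≤ λ_i). If ℓ = λ'_j, then the hook length satisfies a_i − a_ℓ < h_{i,j}(λ) < a_i − a_{ℓ+1}, with the convention a_{s+1} = −1. -/
open Filter

/-- A partition represented as a weakly decreasing, eventually zero sequence of parts
(0-indexed: `f i` is the (i+1)-st part). -/
def IsPartition (f : ℕ → ℕ) : Prop :=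
  Antitone f ∧ ∀ᶠ i in atTop, f i = 0

/-- The size `|λ|` of a partition. -/
noncomputable def psize (f : ℕ → ℕ) : ℕ := ∑' i, f i

/-- The conjugate partition: `conj f j` is the number of parts of `f` exceeding `j`,
i.e. the (j+1)-st column length. -/
noncomputable def conj (f : ℕ → ℕ) : ℕ → ℕ := fun j => Nat.card {i : ℕ // j < f i}

/-- The Durfee square size: the number of indices `i` with `λ_{i+1} ≥ i+1`. -/
noncomputable def durfee (f : ℕ → ℕ) : ℕ := Nat.card {i : ℕ // i < f i}

/-- Top Frobenius entry `a_{i+1} = λ_{i+1} - (i+1)` (0-indexed). -/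
noncomputable def frobA (f : ℕ → ℕ) (i : ℕ) : ℕ := f i - (i + 1)

/-- Bottom Frobenius entry `b_{i+1} = λ'_{i+1} - (i+1)` (0-indexed). -/
noncomputable def frobB (f : ℕ → ℕ) (i : ℕ) : ℕ := conj f i - (i + 1)

/-- Hook length of the (0-indexed) box `(i,j)` (valid when `j < f i`):
`h = (λ_i - j) + (λ'_j - i) - 1` in 1-indexed terms, which equals
`(λ_i - i) + (λ'_j - j) + 1`. -/
noncomputable def hook (f : ℕ → ℕ) (i j : ℕ) : ℕ :=
  (f i - (j + 1)) + (conj f j - (i + 1)) + 1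

/-- A `t`-core partition: no hook length divisible by `t`. -/
def IsTCore (t : ℕ) (f : ℕ → ℕ) : Prop :=
  IsPartition f ∧ ∀ i j, j < f i → ¬ t ∣ hook f i j

/-- The 1-indexed top Frobenius entry `a_k = λ_k - k` for `1 ≤ k ≤ s`,
with the convention `a_k = -1` for `k > s` (in particular `a_{s+1} = -1`). -/
noncomputable def frobAZ (f : ℕ → ℕ) (k : ℕ) : ℤ :=
  if 1 ≤ k ∧ k ≤ durfee f then (f (k - 1) : ℤ) - k else -1

/-!
With `ℓ = λ'_j` the last row reaching column `j`, we have `λ_ℓ ≥ j > λ_{ℓ+1}`, and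
`i ≤ ℓ ≤ s` because `j > s`. The hook length is `h = a_i + ℓ - j + 1`, so `a_i - h = j - ℓ - 1`,
which lies strictly below `a_ℓ = λ_ℓ - ℓ` and strictly above `a_{ℓ+1}`, the latter being
`λ_{ℓ+1} - ℓ - 1` or `-1`.
-/

theorem IsLowerSet.mem_iff_lt_card {S : Set ℕ} (hS : IsLowerSet S) (hfin : S.Finite) (n : ℕ) :
    n ∈ S ↔ n < Nat.card S := by
  obtain hS | ⟨a, rfl⟩ := hS.eq_univ_or_Iio
  · exact absurd (hS ▸ hfin) Set.infinite_univ
  · simp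

namespace IsPartition

variable {f : ℕ → ℕ}

theorem finite_support (hf : IsPartition f) : {i | f i ≠ 0}.Finite :=
  Filter.eventually_cofinite.mp (Nat.cofinite_eq_atTop ▸ hf.2)

theorem lt_conj_iff (hf : IsPartition f) {j n : ℕ} : n < conj f j ↔ j < f n :=
  (IsLowerSet.mem_iff_lt_card (S := {i | j < f i}) (fun _ _ hle h => h.trans_le (hf.1 hle))
    (hf.finite_support.subset fun _ => Nat.ne_zero_of_lt) n).symm

theorem lt_durfee_iff (hf : IsPartition f) {n : ℕ} : n < durfee f ↔ n < f n :=
  (IsLowerSet.mem_iff_lt_card (S := {i | i < f i})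
    (fun _ _ hle h => hle.trans_lt (h.trans_le (hf.1 hle)))
    (hf.finite_support.subset fun _ => Nat.ne_zero_of_lt) n).symm

theorem conj_le_durfee (hf : IsPartition f) {c : ℕ} (hc : durfee f ≤ c) :
    conj f c ≤ durfee f := by
  by_contra! h
  have : durfee f < f (durfee f) := hc.trans_lt (hf.lt_conj_iff.mp h)
  exact lt_irrefl _ (hf.lt_durfee_iff.mpr this)

theorem apply_conj_le (hf : IsPartition f) (c : ℕ) : f (conj f c) ≤ c :=
  not_lt.mp fun h => lt_irrefl _ (hf.lt_conj_iff.mpr h)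

theorem hook_eq (hf : IsPartition f) {i j : ℕ} (h : j < f i) :
    (hook f i j : ℤ) = f i - j + conj f j - i - 1 := by
  have := hf.lt_conj_iff.mpr h
  rw [hook]
  omega

end IsPartition

theorem frobAZ_of_le_durfee {f : ℕ → ℕ} {k : ℕ} (h1 : 1 ≤ k) (hk : k ≤ durfee f) :
    frobAZ f k = f (k - 1) - k :=
  if_pos ⟨h1, hk⟩

theorem frobAZ_succ_lt {f : ℕ → ℕ} {k m : ℕ} (hfk : f k ≤ m) (hkm : k ≤ m) :
    frobAZ f (k + 1) < m - k := by
  unfold frobAZ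
  split_ifs
  · rw [Nat.add_sub_cancel]
    omega
  · omega

/-- For a box `(i,j)` (1-indexed) with `i ≤ s < j ≤ λ_i` and `ℓ = λ'_j`,
the hook length satisfies `a_i - a_ℓ < h_{i,j} < a_i - a_{ℓ+1}` (with `a_{s+1} = -1`). -/
theorem stmt4 (f : ℕ → ℕ) (hf : IsPartition f) (i j : ℕ)
    (h1 : 1 ≤ i) (h2 : i ≤ durfee f) (h3 : durfee f < j) (h4 : j ≤ f (i - 1)) :
    frobAZ f i - frobAZ f (conj f (j - 1)) < (hook f (i - 1) (j - 1) : ℤ) ∧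
    (hook f (i - 1) (j - 1) : ℤ) < frobAZ f i - frobAZ f (conj f (j - 1) + 1) := by
  set ℓ := conj f (j - 1)
  have hiℓ : i - 1 < ℓ := hf.lt_conj_iff.mpr (by omega)
  have hℓs : ℓ ≤ durfee f := hf.conj_le_durfee (by omega)
  have hjℓ : j - 1 < f (ℓ - 1) := hf.lt_conj_iff.mp (by omega)
  have hℓj : frobAZ f (ℓ + 1) < (j - 1 : ℕ) - ℓ :=
    frobAZ_succ_lt (hf.apply_conj_le _) (by omega)
  rw [hf.hook_eq (by omega), frobAZ_of_le_durfee h1 h2, frobAZ_of_le_durfee (by omega) hℓs]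
  omega
end

section
/- The generating function for all partitions is the constant term in z of the double product: Σ_λ q^{|λ|} = [z^0] (−zq; q)_∞ (−1/z; q)_∞, where the sum is over all partitions λ. -/
/-!
Expanding both products,
`(-zq; q)_∞ (-1/z; q)_∞ = ∑ z ^ (#S - #T) q ^ (∑_{s ∈ S} (s + 1) + ∑_{t ∈ T} t)`
over pairs of finite sets `S, T ⊆ ℕ`. The expansion converges absolutely on the unit circle, so
averaging over `z = e^{iθ}` term by term keeps exactly the pairs with `#S = #T`. These are the
Frobenius coordinates of partitions: a partition with Durfee square `d` has
`S = {λ_i - i : i ≤ d}` and `T = {λ'_i - i : i ≤ d}`, and its diagram is the disjoint union of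
the `d` diagonal hooks, of sizes `(λ_i - i) + (λ'_i - i) + 1`, so that the weight of `(S, T)`
is `|λ|`.
-/

open Filter

open Finset

lemma lt_card_iff_of_downward_closed {P : ℕ → Prop}
    (hP : ∀ ⦃i j⦄, i ≤ j → P j → P i) {N : ℕ} (hN : ¬ P N) (i : ℕ) :
    P i ↔ i < Nat.card {i // P i} := by
  classical
  have hex : ∃ n, ¬ P n := ⟨N, hN⟩
  have key : ∀ i, P i ↔ i < Nat.find hex := fun i =>
    ⟨fun hi => lt_of_not_ge fun h => Nat.find_spec hex (hP h hi),
      fun hi => not_not.1 (Nat.find_min hex hi)⟩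
  rw [key, Nat.card_congr ((Equiv.subtypeEquivRight key).trans Fin.equivSubtype.symm),
    Nat.card_fin]

lemma StrictAntiOn.apply_add_le {u : ℕ → ℕ} {n : ℕ} (hu : StrictAntiOn u (Set.Iio n))
    {i j : ℕ} (hij : i ≤ j) (hj : j < n) : u j + j ≤ u i + i := by
  induction j, hij using Nat.le_induction with
  | base => rfl
  | succ j hij ih =>
    have := hu (show j < n by omega) hj (Nat.lt_succ_self j)
    have := ih (by omega)
    omega

lemma StrictAntiOn.le_apply_add {u : ℕ → ℕ} {n : ℕ} (hu : StrictAntiOn u (Set.Iio n))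
    {i : ℕ} (hi : i < n) : n ≤ u i + i + 1 := by
  have := hu.apply_add_le (i := i) (j := n - 1) (by omega) (by omega)
  omega

section NthLargest

noncomputable def nthLargest (S : Finset ℕ) (i : ℕ) : ℕ :=
  if h : i < #S then S.orderEmbOfFin rfl (Fin.rev ⟨i, h⟩) else 0

variable {S : Finset ℕ}

lemma nthLargest_mem {i : ℕ} (h : i < #S) : nthLargest S i ∈ S := by
  simp [nthLargest, h]

lemma nthLargest_strictAntiOn : StrictAntiOn (nthLargest S) (Set.Iio #S) := by
  intro i (hi : i < #S) j (hj : j < #S) hij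
  simp only [nthLargest, dif_pos hi, dif_pos hj]
  exact (S.orderEmbOfFin rfl).strictMono (Fin.rev_lt_rev.2 hij)

lemma image_nthLargest : (range #S).image (nthLargest S) = S := by
  refine eq_of_subset_of_card_le (fun x hx => ?_) ?_
  · obtain ⟨i, hi, rfl⟩ := mem_image.1 hx
    exact nthLargest_mem (mem_range.1 hi)
  · rw [card_image_of_injOn (by simpa using nthLargest_strictAntiOn.injOn), card_range]

lemma nthLargest_image {u : ℕ → ℕ} {d : ℕ} (hu : StrictAntiOn u (Set.Iio d)) {i : ℕ}
    (hi : i < d) : nthLargest ((range d).image u) i = u i := by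
  set S := (range d).image u
  have hS : #S = d := by rw [card_image_of_injOn (by simpa using hu.injOn), card_range]
  have hmono : StrictMono fun k : Fin #S => u (d - 1 - k) := fun k l hkl =>
    hu (show d - 1 - l < d by omega) (show d - 1 - k < d by omega) (by omega)
  have huniq := orderEmbOfFin_unique rfl
    (fun k => mem_image_of_mem u (mem_range.2 (by omega))) hmono
  have hi' : i < #S := hS ▸ hi
  rw [nthLargest, dif_pos hi', ← congrFun huniq]
  simp only [Fin.val_rev]
  congr 1
  omega

end NthLargest

section Conjugate

variable {f g : ℕ → ℕ}

lemma IsPartition.exists_eq_zero (hf : IsPartition f) : ∃ N, f N = 0 :=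
  hf.2.exists

lemma lt_conj_iff (hf : IsPartition f) {i j : ℕ} : i < conj f j ↔ j < f i := by
  obtain ⟨N, hN⟩ := hf.exists_eq_zero
  exact (lt_card_iff_of_downward_closed (fun _ _ h h' => h'.trans_le (hf.1 h))
    (N := N) (by omega) i).symm

lemma lt_durfee_iff (hf : IsPartition f) {i : ℕ} : i < durfee f ↔ i < f i := by
  obtain ⟨N, hN⟩ := hf.exists_eq_zero
  exact (lt_card_iff_of_downward_closed (fun i j h h' => (h.trans_lt h').trans_le (hf.1 h))
    (N := N) (by omega) i).symm

lemma durfee_eq_of_forall_lt_iff {n : ℕ} (h : ∀ i, i < f i ↔ i < n) : durfee f = n := by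
  rw [durfee, Nat.card_congr ((Equiv.subtypeEquivRight h).trans Fin.equivSubtype.symm),
    Nat.card_fin]

lemma apply_le_durfee_of_durfee_le (hf : IsPartition f) {i : ℕ} (hi : durfee f ≤ i) :
    f i ≤ durfee f :=
  (hf.1 hi).trans (not_lt.1 fun h => (lt_durfee_iff hf).2 h |>.false)

lemma IsPartition.conj (hf : IsPartition f) : IsPartition (conj f) := by
  refine ⟨fun j j' hj => ?_, eventually_atTop.2 ⟨f 0, fun j hj => ?_⟩⟩
  · exact le_of_forall_lt fun i hi => (lt_conj_iff hf).2 (hj.trans_lt ((lt_conj_iff hf).1 hi))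
  · by_contra h
    have := (lt_conj_iff hf).1 (Nat.pos_of_ne_zero h)
    omega

lemma conj_conj (hf : IsPartition f) : conj (conj f) = f :=
  funext fun j => eq_of_forall_lt_iff fun i => by rw [lt_conj_iff hf.conj, lt_conj_iff hf]

lemma durfee_conj (hf : IsPartition f) : durfee (conj f) = durfee f :=
  durfee_eq_of_forall_lt_iff fun i => by rw [lt_conj_iff hf, lt_durfee_iff hf]

lemma IsPartition.sup (hf : IsPartition f) (hg : IsPartition g) : IsPartition (f ⊔ g) :=
  ⟨hf.1.sup hg.1, (hf.2.and hg.2).mono fun i h => by simp [h.1, h.2]⟩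

lemma conj_sup (hf : IsPartition f) (hg : IsPartition g) : conj (f ⊔ g) = conj f ⊔ conj g :=
  funext fun j => eq_of_forall_lt_iff fun i => by
    simp only [Pi.sup_apply, lt_sup_iff, lt_conj_iff (hf.sup hg), lt_conj_iff hf, lt_conj_iff hg]

end Conjugate

section FrobeniusCoordinates

variable {f : ℕ → ℕ} {S T : Finset ℕ}

noncomputable def frobRows (S : Finset ℕ) (i : ℕ) : ℕ :=
  if i < #S then nthLargest S i + i + 1 else 0

lemma isPartition_frobRows (S : Finset ℕ) : IsPartition (frobRows S) := by
  refine ⟨fun i j hij => ?_, eventually_atTop.2 ⟨#S, fun i hi => if_neg (by omega)⟩⟩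
  unfold frobRows
  split_ifs with hj hi hi
  · have := nthLargest_strictAntiOn.apply_add_le hij hj
    omega
  · omega
  · omega
  · rfl

lemma card_le_frobRows {i : ℕ} (hi : i < #S) : #S ≤ frobRows S i := by
  rw [frobRows, if_pos hi]
  exact nthLargest_strictAntiOn.le_apply_add hi

lemma conj_frobRows_le (S : Finset ℕ) (i : ℕ) : conj (frobRows S) i ≤ #S :=
  not_lt.1 fun h => by simpa [frobRows] using (lt_conj_iff (isPartition_frobRows S)).1 h

/-- The partition with Frobenius coordinates `(S, T)`, as the union of the diagram of its first
`#S` rows and the transpose of the diagram built the same way from `T`; conjugation then just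
swaps `S` and `T`. -/
noncomputable def ofFrobenius (S T : Finset ℕ) : ℕ → ℕ :=
  frobRows S ⊔ conj (frobRows T)

lemma isPartition_ofFrobenius : IsPartition (ofFrobenius S T) :=
  (isPartition_frobRows S).sup (isPartition_frobRows T).conj

lemma conj_ofFrobenius : conj (ofFrobenius S T) = ofFrobenius T S := by
  rw [ofFrobenius, conj_sup (isPartition_frobRows S) (isPartition_frobRows T).conj,
    conj_conj (isPartition_frobRows T), sup_comm, ofFrobenius]

lemma ofFrobenius_of_lt (h : #T ≤ #S) {i : ℕ} (hi : i < #S) :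
    ofFrobenius S T i = nthLargest S i + i + 1 := by
  have := card_le_frobRows hi
  have := conj_frobRows_le T i
  rw [ofFrobenius, Pi.sup_apply, sup_eq_left.2 (by omega), frobRows, if_pos hi]

lemma durfee_ofFrobenius (h : #S = #T) : durfee (ofFrobenius S T) = #S :=
  durfee_eq_of_forall_lt_iff fun i => by
    by_cases hi : i < #S
    · rw [ofFrobenius_of_lt h.ge hi]
      omega
    · have := conj_frobRows_le T i
      rw [ofFrobenius, Pi.sup_apply, frobRows, if_neg hi]
      simp only [zero_le, sup_of_le_right]
      omega

noncomputable def frobeniusSet (f : ℕ → ℕ) : Finset ℕ :=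
  (range (durfee f)).image (frobA f)

lemma frobeniusSet_ofFrobenius (h : #S = #T) : frobeniusSet (ofFrobenius S T) = S := by
  rw [frobeniusSet, durfee_ofFrobenius h]
  conv_rhs => rw [← image_nthLargest (S := S)]
  refine image_congr fun i hi => ?_
  rw [frobA, ofFrobenius_of_lt h.ge (mem_range.1 hi)]
  omega

lemma strictAntiOn_frobA (hf : IsPartition f) : StrictAntiOn (frobA f) (Set.Iio (durfee f)) := by
  intro i _ j (hj : j < durfee f) hij
  have := (lt_durfee_iff hf).1 hj
  have := hf.1 hij.le
  simp only [frobA]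
  omega

lemma card_frobeniusSet (hf : IsPartition f) : #(frobeniusSet f) = durfee f := by
  rw [frobeniusSet, card_image_of_injOn (by simpa using (strictAntiOn_frobA hf).injOn),
    card_range]

lemma frobRows_frobeniusSet (hf : IsPartition f) (i : ℕ) :
    frobRows (frobeniusSet f) i = if i < durfee f then f i else 0 := by
  rw [frobRows, card_frobeniusSet hf]
  split_ifs with hi
  · have := (lt_durfee_iff hf).1 hi
    rw [frobeniusSet, nthLargest_image (strictAntiOn_frobA hf) hi, frobA]
    omega
  · rfl

lemma ofFrobenius_frobeniusSet (hf : IsPartition f) :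
    ofFrobenius (frobeniusSet f) (frobeniusSet (conj f)) = f := by
  have hlegs : ∀ i, conj (frobRows (frobeniusSet (conj f))) i = min (f i) (durfee f) := fun i =>
    eq_of_forall_lt_iff fun j => by
      rw [lt_conj_iff (isPartition_frobRows _), frobRows_frobeniusSet hf.conj, durfee_conj hf]
      split_ifs with hj
      · rw [lt_conj_iff hf]
        omega
      · omega
  funext i
  rw [ofFrobenius, Pi.sup_apply, hlegs, frobRows_frobeniusSet hf]
  split_ifs with hi
  · omega
  · have := apply_le_durfee_of_durfee_le hf (not_lt.1 hi)
    omega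

noncomputable def frobeniusCoordsEquiv :
    {f : ℕ → ℕ // IsPartition f} ≃ {p : Finset ℕ × Finset ℕ // #p.1 = #p.2} where
  toFun f := ⟨(frobeniusSet f, frobeniusSet (conj f)), by
    rw [card_frobeniusSet f.2, card_frobeniusSet f.2.conj, durfee_conj f.2]⟩
  invFun p := ⟨ofFrobenius p.1.1 p.1.2, isPartition_ofFrobenius⟩
  left_inv f := Subtype.ext (ofFrobenius_frobeniusSet f.2)
  right_inv p := Subtype.ext <| Prod.ext (frobeniusSet_ofFrobenius p.2) <|
    (congrArg frobeniusSet conj_ofFrobenius).trans (frobeniusSet_ofFrobenius p.2.symm)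

lemma psize_eq_sum_range (hf : IsPartition f) {N : ℕ} (hN : f N = 0) :
    psize f = ∑ i ∈ range N, f i :=
  tsum_eq_sum fun i hi => by have := hf.1 (not_lt.1 (mem_range.not.1 hi)); omega

/-- Counting the cells strictly below the diagonal by rows and by columns. -/
lemma sum_min_eq_sum_frobA_conj (hf : IsPartition f) {M : ℕ} (hfM : ∀ i, f i ≤ M)
    (hconjM : ∀ j, conj f j ≤ M) :
    ∑ i ∈ range M, min (f i) i = ∑ j ∈ range M, frobA (conj f) j := by
  have hrow : ∀ i ∈ range M,
      #(bipartiteAbove (fun i j => j < i ∧ j < f i) (range M) i) = min (f i) i := fun i _ => by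
    rw [bipartiteAbove, ← card_range (min (f i) i)]
    congr 1
    ext j
    simp only [mem_filter, mem_range]
    have := hfM i
    omega
  have hcol : ∀ j ∈ range M,
      #(bipartiteBelow (fun i j => j < i ∧ j < f i) (range M) j) = frobA (conj f) j :=
      fun j _ => by
    rw [bipartiteBelow, frobA, show conj f j - (j + 1) = conj f j - j - 1 by omega,
      ← Nat.card_Ioo]
    congr 1
    ext i
    simp only [mem_filter, mem_range, mem_Ioo, ← lt_conj_iff hf]
    have := hconjM j
    omega
  rw [← sum_congr rfl hrow, sum_card_bipartiteAbove_eq_sum_card_bipartiteBelow,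
    sum_congr rfl hcol]

lemma sum_range_eq_sum_range_durfee (hf : IsPartition f) {M : ℕ} (hM : durfee f ≤ M)
    {φ : ℕ → ℕ} (hφ : ∀ i, f i ≤ i → φ i = 0) :
    ∑ i ∈ range M, φ i = ∑ i ∈ range (durfee f), φ i :=
  (sum_subset (range_subset_range.2 hM) fun i _ hi =>
    hφ i (not_lt.1 ((lt_durfee_iff hf).not.1 (mem_range.not.1 hi)))).symm

lemma psize_eq_sum_frobA (hf : IsPartition f) :
    psize f = ∑ i ∈ range (durfee f), (frobA f i + 1) +
      ∑ j ∈ range (durfee f), frobA (conj f) j := by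
  obtain ⟨N, hN⟩ := hf.exists_eq_zero
  set M := N + f 0
  have hfM0 : f M = 0 := Nat.le_zero.1 ((hf.1 (show N ≤ M by omega)).trans hN.le)
  have hfM : ∀ i, f i ≤ M := fun i => (hf.1 (Nat.zero_le i)).trans (by omega)
  have hconjM : ∀ j, conj f j ≤ M := fun j => not_lt.1 fun h => by
    have := (lt_conj_iff hf).1 h
    omega
  have hdM : durfee f ≤ M := not_lt.1 fun h => by
    have := (lt_durfee_iff hf).1 h
    omega
  have hcols := sum_range_eq_sum_range_durfee hf.conj (M := M) (by rwa [durfee_conj hf])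
    (φ := frobA (conj f)) fun j h => by simp only [frobA]; omega
  rw [durfee_conj hf] at hcols
  calc psize f = ∑ i ∈ range M, f i := psize_eq_sum_range hf hfM0
    _ = ∑ i ∈ range M, (f i - i) + ∑ i ∈ range M, min (f i) i := by
        rw [← sum_add_distrib]
        exact sum_congr rfl fun i _ => by omega
    _ = ∑ i ∈ range (durfee f), (f i - i) + ∑ j ∈ range (durfee f), frobA (conj f) j := by
        rw [sum_min_eq_sum_frobA_conj hf hfM hconjM, hcols,
          sum_range_eq_sum_range_durfee hf hdM fun i h => by omega]
    _ = _ := by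
        congr 1
        refine sum_congr rfl fun i hi => ?_
        have := (lt_durfee_iff hf).1 (mem_range.1 hi)
        simp only [frobA]
        omega

def frobWeight (p : Finset ℕ × Finset ℕ) : ℕ := ∑ a ∈ p.1, (a + 1) + ∑ b ∈ p.2, b

lemma frobWeight_frobeniusCoordsEquiv (f : {f : ℕ → ℕ // IsPartition f}) :
    frobWeight (frobeniusCoordsEquiv f) = psize f.1 := by
  obtain ⟨f, hf⟩ := f
  rw [psize_eq_sum_frobA hf, frobWeight]
  simp only [frobeniusCoordsEquiv, Equiv.coe_fn_mk, frobeniusSet]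
  rw [sum_image (by simpa using (strictAntiOn_frobA hf).injOn),
    sum_image (by simpa using (strictAntiOn_frobA hf.conj).injOn), durfee_conj hf]

end FrobeniusCoordinates

def frobCharge (p : Finset ℕ × Finset ℕ) : ℤ := #p.1 - #p.2

lemma frobCharge_eq_zero_iff {p : Finset ℕ × Finset ℕ} : frobCharge p = 0 ↔ #p.1 = #p.2 := by
  rw [frobCharge, sub_eq_zero, Nat.cast_inj]

lemma summable_norm_finsetProd {R ι : Type*} [NormedCommRing R] [NormMulClass R]
    [NormOneClass R] {u : ι → R} (hu : Summable (‖u ·‖)) :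
    Summable fun s : Finset ι => ‖∏ i ∈ s, u i‖ := by
  simpa only [norm_prod] using summable_finsetProd_of_summable_nonneg (fun i => norm_nonneg _) hu

lemma tsum_pow_eq_tsum_card_fiber_mul_pow {R α : Type*} [NormedRing R] [CompleteSpace R]
    (g : α → ℕ) {x : R} (h : Summable fun a => x ^ g a) :
    ∑' a, x ^ g a = ∑' n, (Nat.card (g ⁻¹' {n}) : R) * x ^ n := by
  rw [← (h.hasSum.tsum_fiberwise g).tsum_eq]
  refine tsum_congr fun n => ?_
  rw [tsum_congr fun b : g ⁻¹' {n} => congrArg (x ^ ·) b.2, tsum_const, nsmul_eq_mul]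

section ProductExpansion

variable {𝕜 : Type*} [NormedField 𝕜] {z q : 𝕜}

lemma tprod_one_add_mul_pow [CompleteSpace 𝕜] {e : ℕ → ℕ}
    (h : Summable fun k => ‖z * q ^ e k‖) :
    ∏' k, (1 + z * q ^ e k) = ∑' S : Finset ℕ, z ^ #S * q ^ ∑ k ∈ S, e k := by
  rw [tprod_one_add (summable_norm_finsetProd h).of_norm]
  simp only [prod_mul_distrib, prod_const, prod_pow_eq_pow_sum]

lemma summable_norm_mul_pow_add (hq : ‖q‖ < 1) (c : ℕ) :
    Summable fun k => ‖z * q ^ (k + c)‖ := by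
  refine ((summable_geometric_of_lt_one (norm_nonneg q) hq).mul_left (‖z‖ * ‖q‖ ^ c)).congr
    fun k => ?_
  rw [norm_mul, norm_pow, pow_add]
  ring

lemma summable_norm_pow_frobWeight (hq : ‖q‖ < 1) :
    Summable fun p => ‖q ^ frobWeight p‖ := by
  have hS := summable_norm_finsetProd (summable_norm_mul_pow_add (z := 1) hq 1)
  have hT := summable_norm_finsetProd (summable_norm_mul_pow_add (z := 1) hq 0)
  refine (hS.mul_norm hT).congr fun p => ?_
  rw [frobWeight, pow_add, ← prod_pow_eq_pow_sum, ← prod_pow_eq_pow_sum]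
  simp

lemma tprod_mul_tprod_eq_tsum_frobCharge [CompleteSpace 𝕜] (hz : z ≠ 0) (hq : ‖q‖ < 1) :
    (∏' k : ℕ, (1 + z * q ^ (k + 1))) * (∏' k : ℕ, (1 + z⁻¹ * q ^ k)) =
      ∑' p, z ^ frobCharge p * q ^ frobWeight p := by
  have h1 := summable_norm_mul_pow_add (z := z) hq 1
  have h2 := summable_norm_mul_pow_add (z := z⁻¹) hq 0
  simp only [add_zero] at h2
  rw [tprod_one_add_mul_pow h1, tprod_one_add_mul_pow h2, tsum_mul_tsum_of_summable_norm
    (by simpa [prod_mul_distrib, prod_pow_eq_pow_sum] using summable_norm_finsetProd h1)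
    (by simpa [prod_mul_distrib, ← prod_pow_eq_pow_sum] using summable_norm_finsetProd h2)]
  refine tsum_congr fun p => ?_
  rw [frobCharge, zpow_sub₀ hz, zpow_natCast, zpow_natCast, frobWeight, pow_add, inv_pow,
    div_eq_mul_inv]
  ring

end ProductExpansion

section CircleAverage

open Complex MeasureTheory

lemma integral_exp_mul_I_zpow (m : ℤ) :
    ∫ θ in (0 : ℝ)..2 * Real.pi, exp (θ * I) ^ m = if m = 0 then 2 * Real.pi else 0 := by
  split_ifs with hm
  · simp [hm]
  · have hc : (m : ℂ) * I ≠ 0 := mul_ne_zero (Int.cast_ne_zero.2 hm) I_ne_zero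
    have hexp : ∀ θ : ℝ, exp (θ * I) ^ m = exp (m * I * θ) := fun θ => by
      rw [← exp_int_mul]
      ring_nf
    simp_rw [hexp]
    rw [integral_exp_mul_complex hc]
    have : (m : ℂ) * I * ↑(2 * Real.pi) = m * (2 * Real.pi * I) := by push_cast; ring
    rw [this, exp_int_mul_two_pi_mul_I]
    simp

lemma intervalIntegral_tsum_zpow_mul {α : Type*} [Countable α] (c : α → ℤ) {a : α → ℂ}
    (ha : Summable (‖a ·‖)) :
    ∫ θ in (0 : ℝ)..2 * Real.pi, ∑' p, exp (θ * I) ^ c p * a p =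
      2 * Real.pi * ∑' p : {p // c p = 0}, a p := by
  have hnorm : ∀ (θ : ℝ) p, ‖exp (θ * I) ^ c p * a p‖ = ‖a p‖ := fun θ p => by
    rw [norm_mul, norm_zpow, norm_exp_ofReal_mul_I, one_zpow, one_mul]
  have hsum := intervalIntegral.hasSum_integral_of_dominated_convergence (fun p _ => ‖a p‖)
    (a := 0) (b := 2 * Real.pi) (μ := volume) (F := fun p (θ : ℝ) => exp (θ * I) ^ c p * a p)
    (fun p => ((Continuous.zpow₀ (by fun_prop) _ fun _ => Or.inl (exp_ne_zero _)).mul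
      continuous_const).aestronglyMeasurable)
    (fun p => ae_of_all _ fun θ _ => (hnorm θ p).le) (ae_of_all _ fun _ _ => ha)
    intervalIntegrable_const
    (ae_of_all _ fun θ _ => (ha.congr fun p => (hnorm θ p).symm).of_norm.hasSum)
  rw [← hsum.tsum_eq,
    show ∑' p : {p // c p = 0}, a p = ∑' p : ({p | c p = 0} : Set α), a p from rfl,
    _root_.tsum_subtype, ← tsum_mul_left]
  refine tsum_congr fun p => ?_
  rw [intervalIntegral.integral_mul_const, integral_exp_mul_I_zpow, Set.indicator_apply]
  split_ifs <;> simp_all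

end CircleAverage

open Complex in
/-- The generating function for partitions is the constant term in `z` of
`(-zq; q)_∞ (-1/z; q)_∞`, the constant term being extracted as the average of the
product over the unit circle `z = e^{iθ}`. -/
theorem stmt18 (q : ℂ) (hq : ‖q‖ < 1) :
    ∑' n : ℕ, (Nat.card {f : ℕ → ℕ // IsPartition f ∧ psize f = n} : ℂ) * q ^ n =
      (1 / (2 * (Real.pi : ℂ))) *
        ∫ θ : ℝ in (0 : ℝ)..(2 * Real.pi),
          (∏' k : ℕ, (1 + Complex.exp (θ * Complex.I) * q ^ (k + 1))) *
          (∏' k : ℕ, (1 + (Complex.exp (θ * Complex.I))⁻¹ * q ^ k)) := by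
  have hw := summable_norm_pow_frobWeight hq
  have hP : Summable fun f : {f // IsPartition f} => q ^ psize f.1 := by
    simpa only [Function.comp_def, frobWeight_frobeniusCoordsEquiv] using
      frobeniusCoordsEquiv.summable_iff.2 (hw.of_norm.subtype {p | #p.1 = #p.2})
  simp_rw [tprod_mul_tprod_eq_tsum_frobCharge (exp_ne_zero _) hq]
  rw [intervalIntegral_tsum_zpow_mul frobCharge hw, one_div,
    inv_mul_cancel_left₀ (by simp [Real.pi_ne_zero]),
    ← (Equiv.subtypeEquivRight fun p => frobCharge_eq_zero_iff.symm).tsum_eq,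
    ← frobeniusCoordsEquiv.tsum_eq]
  simp only [Equiv.subtypeEquivRight_apply_coe, frobWeight_frobeniusCoordsEquiv]
  rw [tsum_pow_eq_tsum_card_fiber_mul_pow _ hP]
  exact tsum_congr fun n => by
    rw [← Nat.card_congr (Equiv.subtypeSubtypeEquivSubtypeInter IsPartition (psize · = n))]
    rfl
end
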